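/- Let 0 ≤ r ≤ N, let W ∈ W_r, and let 0 ≤ k ≤ N−r. Then A(A₊^{k}W) = A₊^{k+1}W + m(r,k−1)·A₊^{k−1}W, where the second term is zero when k = 0 (using m(r,−1) = 0) and A₊^{N−r+1}W = 0, so the first term vanishes when k = N−r. -/
import Mathlib


open Finset

/-- Outer adjacency operator on vertex functions of the Boolean hypercube `B_N`:
`(A₊V)(S) = Σ_{s∈S} V(S∖{s})`. -/
def Aplus (N : ℕ) (V : Finset (Fin N) → ℝ) : Finset (Fin N) → ℝ :=
  fun S => ∑ s ∈ S, V (S.erase s)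

/-- Inner adjacency operator: `(A₋V)(R) = Σ_{b∉R} V(R∪{b})`. -/
def Aminus (N : ℕ) (V : Finset (Fin N) → ℝ) : Finset (Fin N) → ℝ :=
  fun R => ∑ b ∈ Rᶜ, V (insert b R)

/-- Adjacency operator `A = A₊ + A₋`. -/
def Adj (N : ℕ) (V : Finset (Fin N) → ℝ) : Finset (Fin N) → ℝ :=
  fun S => Aplus N V S + Aminus N V S

/-- Graph Laplacian `L = N·I − A`. -/
def Lap (N : ℕ) (V : Finset (Fin N) → ℝ) : Finset (Fin N) → ℝ :=
  fun S => (N : ℝ) * V S - Adj N V S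

/-- Inner product `⟨V,U⟩ = Σ_S V(S)U(S)` on vertex functions. -/
def inner' (N : ℕ) (V U : Finset (Fin N) → ℝ) : ℝ :=
  ∑ S : Finset (Fin N), V S * U S

/-- `V` is supported on the Hamming sphere `Σ_r` (vanishes off sets of cardinality `r`). -/
def suppOn (N r : ℕ) (V : Finset (Fin N) → ℝ) : Prop :=
  ∀ S : Finset (Fin N), S.card ≠ r → V S = 0

/-- Membership in `W_r`: supported on `Σ_r` and orthogonal to `A₊ℓ²(Σ_{r−1})`.
(For `r = 0` the orthogonality condition is vacuous, so `W_0 = ℓ²(Σ_0)`.) -/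
def memW (N r : ℕ) (W : Finset (Fin N) → ℝ) : Prop :=
  suppOn N r W ∧
    ∀ U : Finset (Fin N) → ℝ, suppOn N (r - 1) U → inner' N W (Aplus N U) = 0

/-- `m(r,k) = Σ_{j=0}^{k} (N − 2(r+j))`. -/
def mcoef (N r k : ℕ) : ℝ :=
  ∑ j ∈ Finset.range (k + 1), ((N : ℝ) - 2 * ((r : ℝ) + (j : ℝ)))

/-- Hadamard vector `H_S(R) = (−1)^{|R∩S|}`. -/
def Had (N : ℕ) (S R : Finset (Fin N)) : ℝ := (-1 : ℝ) ^ (R ∩ S).card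

/-- Spatial truncation `Q_K`: restriction to the Hamming ball of radius `K`. -/
def QK (N K : ℕ) (V : Finset (Fin N) → ℝ) : Finset (Fin N) → ℝ :=
  fun S => if S.card ≤ K then V S else 0

/-- Spectral projection `P_K`: orthogonal projection onto `span{H_S : |S| ≤ K}`,
given by `P_K V = Σ_{|S|≤K} (⟨V,H_S⟩/2^N)·H_S`. -/
noncomputable def PK (N K : ℕ) (V : Finset (Fin N) → ℝ) : Finset (Fin N) → ℝ :=
  fun R => ∑ S ∈ Finset.univ.filter (fun S : Finset (Fin N) => S.card ≤ K),
    (inner' N V (Had N S) / 2 ^ N) * Had N S R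

/-- Diagonal operator `(TV)(R) = √(2|R|)·V(R)`. -/
noncomputable def Tdiag (N : ℕ) (V : Finset (Fin N) → ℝ) : Finset (Fin N) → ℝ :=
  fun R => Real.sqrt (2 * (R.card : ℝ)) * V R

/-- Boolean difference operator conjugated by the Hadamard transform:
`HBDO = T(αI − L)T + βL`. -/
noncomputable def HBDO (N : ℕ) (α β : ℝ) (V : Finset (Fin N) → ℝ) : Finset (Fin N) → ℝ :=
  fun R => Tdiag N (fun S => α * Tdiag N V S - Lap N (Tdiag N V) S) R + β * Lap N V R

/-- Hadamard transform `(HV)(R) = Σ_S (−1)^{|R∩S|} V(S)`. -/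
def Hmat (N : ℕ) (V : Finset (Fin N) → ℝ) : Finset (Fin N) → ℝ :=
  fun R => ∑ S : Finset (Fin N), Had N S R * V S

/-- Commutator `C = A₋A₊ − A₊A₋`. -/
def Cop (N : ℕ) (V : Finset (Fin N) → ℝ) : Finset (Fin N) → ℝ :=
  fun S => Aminus N (Aplus N V) S - Aplus N (Aminus N V) S

lemma suppOn_aplus {N r : ℕ} {V : Finset (Fin N) → ℝ} (h : suppOn N r V) :
    suppOn N (r + 1) (Aplus N V) := by
  intro S hS
  apply Finset.sum_eq_zero
  intro s hs
  apply h
  intro hc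
  apply hS
  have hpos : 1 ≤ S.card := Finset.card_pos.mpr ⟨s, hs⟩
  rw [Finset.card_erase_of_mem hs] at hc
  omega

lemma suppOn_iter {N r : ℕ} {W : Finset (Fin N) → ℝ} (h : suppOn N r W) :
    ∀ k, suppOn N (r + k) ((Aplus N)^[k] W) := by
  intro k
  induction k with
  | zero => simpa using h
  | succ k ih =>
    rw [Function.iterate_succ_apply']
    exact suppOn_aplus ih

lemma aplus_smul (N : ℕ) (c : ℝ) (V : Finset (Fin N) → ℝ) :
    Aplus N (c • V) = c • Aplus N V := by
  funext S
  simp [Aplus, Finset.mul_sum]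

/-- adjointness: `⟨V, A₊U⟩ = ⟨A₋V, U⟩`. -/
lemma inner_aplus (N : ℕ) (V U : Finset (Fin N) → ℝ) :
    inner' N V (Aplus N U) = inner' N (Aminus N V) U := by
  unfold inner' Aplus Aminus
  simp only [Finset.mul_sum, Finset.sum_mul]
  rw [Finset.sum_sigma', Finset.sum_sigma']
  apply Finset.sum_bij' (fun p _ => (⟨p.1.erase p.2, p.2⟩ : Σ _ : Finset (Fin N), Fin N))
    (fun p _ => (⟨insert p.2 p.1, p.2⟩ : Σ _ : Finset (Fin N), Fin N))
  · intro p hp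
    simp only [Finset.mem_sigma, Finset.mem_univ, true_and] at hp ⊢
    simp [Finset.mem_compl]
  · intro p hp
    simp only [Finset.mem_sigma, Finset.mem_univ, true_and, Finset.mem_compl] at hp ⊢
    simp
  · intro p hp
    simp only [Finset.mem_sigma, Finset.mem_univ, true_and] at hp
    simp [Finset.insert_erase hp]
  · intro p hp
    simp only [Finset.mem_sigma, Finset.mem_univ, true_and, Finset.mem_compl] at hp
    simp [Finset.erase_insert hp]
  · intro p hp
    simp only [Finset.mem_sigma, Finset.mem_univ, true_and] at hp
    rw [Finset.insert_erase hp]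

lemma aminus_eq_zero {N r : ℕ} {W : Finset (Fin N) → ℝ} (hW : memW N r W) :
    Aminus N W = 0 := by
  obtain ⟨hs, ho⟩ := hW
  rcases Nat.eq_zero_or_pos r with hr0 | hrpos
  · funext R
    apply Finset.sum_eq_zero
    intro b hb
    apply hs
    rw [hr0]
    simp [Finset.card_insert_of_notMem (Finset.mem_compl.mp hb)]
  · have hsupp : suppOn N (r - 1) (Aminus N W) := by
      intro R hR
      apply Finset.sum_eq_zero
      intro b hb
      apply hs
      rw [Finset.card_insert_of_notMem (Finset.mem_compl.mp hb)]
      omega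
    have h0 : inner' N (Aminus N W) (Aminus N W) = 0 := by
      rw [← inner_aplus]
      exact ho (Aminus N W) hsupp
    funext R
    have := (Finset.sum_eq_zero_iff_of_nonneg (fun S _ => mul_self_nonneg (Aminus N W S))).mp
      h0 R (Finset.mem_univ R)
    simpa [Pi.zero_apply] using mul_self_eq_zero.mp this

/-- the commutator identity, pointwise. -/
lemma aminus_aplus_comm (N : ℕ) (V : Finset (Fin N) → ℝ) (S : Finset (Fin N)) :
    Aminus N (Aplus N V) S
      = Aplus N (Aminus N V) S + ((N : ℝ) - 2 * S.card) * V S := by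
  unfold Aminus Aplus
  have hL : ∀ b ∈ Sᶜ, ∑ s ∈ insert b S, V ((insert b S).erase s)
      = V S + ∑ s ∈ S, V (insert b (S.erase s)) := by
    intro b hb
    rw [Finset.mem_compl] at hb
    rw [Finset.sum_insert hb, Finset.erase_insert hb]
    congr 1
    apply Finset.sum_congr rfl
    intro s hs
    rw [Finset.erase_insert_of_ne]
    intro h; exact hb (h ▸ hs)
  have hR : ∀ s ∈ S, ∑ b ∈ (S.erase s)ᶜ, V (insert b (S.erase s))
      = V S + ∑ b ∈ Sᶜ, V (insert b (S.erase s)) := by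
    intro s hs
    rw [Finset.compl_erase, Finset.sum_insert (by simp [hs]), Finset.insert_erase hs]
  rw [Finset.sum_congr rfl hL, Finset.sum_congr rfl hR, Finset.sum_add_distrib,
    Finset.sum_add_distrib, Finset.sum_const, Finset.sum_const, Finset.sum_comm]
  have hc : Sᶜ.card = N - S.card := by simp [Finset.card_compl]
  have hle : S.card ≤ N := by
    simpa using Finset.card_le_univ S
  rw [hc, nsmul_eq_mul, nsmul_eq_mul, Nat.cast_sub hle]
  ring
/-- for `W ∈ W_r` and `0 ≤ k ≤ N−r`,
`A(A₊^{k}W) = A₊^{k+1}W + m(r,k−1)·A₊^{k−1}W`, the second term being zero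
when `k = 0` (convention `m(r,−1) = 0`). -/
theorem adj_on_aplus_pow (N r : ℕ) (hN : 1 ≤ N) (hr : r ≤ N)
    (W : Finset (Fin N) → ℝ) (hW : memW N r W) (k : ℕ) (hk : k ≤ N - r) :
    Adj N ((Aplus N)^[k] W)
      = (Aplus N)^[k + 1] W
        + (if k = 0 then (0 : ℝ) else mcoef N r (k - 1)) • (Aplus N)^[k - 1] W := by
  have key : ∀ k : ℕ, Aminus N ((Aplus N)^[k] W)
      = (if k = 0 then (0 : ℝ) else mcoef N r (k - 1)) • (Aplus N)^[k - 1] W := by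
    intro k
    induction k with
    | zero => simp [aminus_eq_zero hW]
    | succ k ih =>
      funext S
      rw [Function.iterate_succ_apply', aminus_aplus_comm, ih]
      have hsupp := suppOn_iter hW.1 k
      have hterm : ((N : ℝ) - 2 * S.card) * ((Aplus N)^[k] W S)
          = ((N : ℝ) - 2 * ((r : ℝ) + k)) * ((Aplus N)^[k] W S) := by
        by_cases h : (Aplus N)^[k] W S = 0
        · rw [h]; ring
        · have hcard : S.card = r + k := by
            by_contra hne
            exact h (hsupp S hne)
          rw [hcard]; push_cast; ring
      rw [aplus_smul, hterm]
      rcases Nat.eq_zero_or_pos k with hk0 | hkpos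
      · subst hk0
        simp [mcoef]
      · have h1 : (if k = 0 then (0 : ℝ) else mcoef N r (k - 1)) = mcoef N r (k - 1) := by
          simp [Nat.pos_iff_ne_zero.mp hkpos]
        have h2 : (Aplus N) ((Aplus N)^[k - 1] W) = (Aplus N)^[k] W := by
          conv_rhs => rw [show k = (k - 1) + 1 by omega]
          rw [Function.iterate_succ_apply']
        have h3 : mcoef N r k = mcoef N r (k - 1) + ((N : ℝ) - 2 * ((r : ℝ) + k)) := by
          unfold mcoef
          rw [show k + 1 = (k - 1 + 1) + 1 by omega, Finset.sum_range_succ]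
          congr 2 <;> push_cast [show k - 1 + 1 = k by omega] <;> ring
        rw [h1]
        simp only [Pi.smul_apply, smul_eq_mul, Nat.add_sub_cancel,
          if_neg (Nat.succ_ne_zero k)]
        rw [h2, h3]
        ring
  funext S
  simp only [Adj, Pi.add_apply, Pi.smul_apply, smul_eq_mul]
  rw [Function.iterate_succ_apply']
  have hk' := congrFun (key k) S
  simp only [Pi.smul_apply, smul_eq_mul] at hk'
  rw [hk']
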